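/- Let H ∈ ℝ^{d×d} be symmetric with all eigenvalues in [μ, L], 0 < μ ≤ L, and let A ∈ ℝ^{2d×2d} be the block matrix A = [[I − α(1+β)H, β²I], [−αH, βI]]. Then the spectral radius of A equals max over the eigenvalues λ of H of ρ_λ(α, β), and consequently ρ(A) ≤ max{ρ_μ(α, β), ρ_L(α, β)}. -/

import Mathlib

/-!
The lower-right block of `z • 1 - A` is the scalar `(z - β) • 1`, so a Schur complement gives
`det (z • 1 - A) = det ((z - β)(z - 1) • 1 + α((1 + β) z - β) • H)`, which diagonalising `H`
turns into `∏ᵢ (z² - (1 + β)(1 - αλᵢ) z + β(1 - αλᵢ))`. Hence the eigenvalues of `A` are the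
roots of these quadratics, and `ρ_λ(α, β)` is exactly the largest modulus of a root of the
quadratic attached to `λ`. For the bound, `ρ_λ` only depends on `s = 1 - αλ` and increases
with `|s|` on each side of `s = 0`, so over `λ ∈ [μ, L]` it is largest at an endpoint.
-/

open Matrix

/-- The spectral radius of a real square matrix: the maximum modulus of its complex
eigenvalues. -/
noncomputable def specRad {m : Type*} [Fintype m] [DecidableEq m]
    (A : Matrix m m ℝ) : ℝ :=
  sSup ((fun z : ℂ => ‖z‖) '' spectrum ℂ (A.map (algebraMap ℝ ℂ)))

/-- `ρ_λ(α, β)`. -/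
noncomputable def rhoLam (α β lam : ℝ) : ℝ :=
  if 0 ≤ (1 + β) ^ 2 * (1 - α * lam) ^ 2 - 4 * β * (1 - α * lam) then
    (1 / 2) * |(1 + β) * (1 - α * lam)| +
      (1 / 2) * Real.sqrt ((1 + β) ^ 2 * (1 - α * lam) ^ 2 - 4 * β * (1 - α * lam))
  else Real.sqrt (β * (1 - α * lam))

section BlockDeterminant

variable {n R : Type*} [Fintype n] [DecidableEq n] [CommRing R]

theorem det_fromBlocks_smul_one_mul_pow (A B C : Matrix n n R) (c : R) :
    det (fromBlocks A B C (c • 1)) * c ^ Fintype.card n =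
      det (c • A - B * C) * c ^ Fintype.card n := by
  have hmul : fromBlocks A B C (c • 1) * fromBlocks (c • 1) 0 (-C) 1 =
      fromBlocks (c • A - B * C) B 0 (c • 1) := by
    simp [fromBlocks_multiply, sub_eq_add_neg]
  simpa [det_mul, det_fromBlocks_zero₁₂, det_fromBlocks_zero₂₁, det_smul] using
    congrArg det hmul

open Polynomial in
/-- `c ^ card n` is cancelled over `R[X]` with `c = X`, which is not a zero divisor there;
the identity is then specialised at `c`. -/
theorem det_fromBlocks_smul_one (A B C : Matrix n n R) (c : R) :
    det (fromBlocks A B C (c • 1)) = det (c • A - B * C) := by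
  have hX := det_fromBlocks_smul_one_mul_pow (A.map Polynomial.C) (B.map Polynomial.C)
    (C.map Polynomial.C) (X : R[X])
  have hXreg := ((monic_X (R := R)).pow (Fintype.card n)).isRegular
  have hc := congrArg (evalRingHom c) (hXreg.right hX)
  have hmapC : ∀ M : Matrix n n R, (evalRingHom c).mapMatrix (M.map Polynomial.C) = M :=
    fun M => by ext; simp
  have hX1 : ((X : R[X]) • (1 : Matrix n n R[X])).map (eval c) = c • 1 := by
    ext i j; by_cases h : i = j <;> simp [one_apply, h]
  have hXA : ((X : R[X]) • A.map Polynomial.C).map (eval c) = c • A := by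
    ext
    simp only [map_apply, Matrix.smul_apply, smul_eq_mul, X_mul_C, eval_mul, eval_C, eval_X]
    ring
  rw [RingHom.map_det, RingHom.map_det, map_sub, map_mul, hmapC, hmapC] at hc
  simpa [RingHom.mapMatrix_apply, fromBlocks_map, Matrix.map_map, Function.comp_def, hX1, hXA]
    using hc

end BlockDeterminant

theorem det_smul_one_add_smul_mul_diagonal_mul {n R : Type*} [Fintype n] [DecidableEq n]
    [CommRing R] {U V : Matrix n n R} (hUV : U * V = 1) (v : n → R) (c e : R) :
    det (c • 1 + e • (U * diagonal v * V)) = ∏ i, (c + e * v i) := by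
  have hdiag : diagonal (fun i => c + e * v i) = c • 1 + e • diagonal v := by
    ext i j; by_cases h : i = j <;> simp [h, one_apply]
  have hconj : c • 1 + e • (U * diagonal v * V) = U * diagonal (fun i => c + e * v i) * V := by
    rw [hdiag, Matrix.mul_add, Matrix.add_mul, Matrix.mul_smul, Matrix.smul_mul, Matrix.mul_one,
      hUV, Matrix.mul_smul, Matrix.smul_mul]
  rw [hconj, det_mul, det_mul, mul_right_comm, ← det_mul, hUV, det_one, one_mul, det_diagonal]

theorem Matrix.IsHermitian.det_smul_one_add_smul_map {n 𝕜 S : Type*} [Fintype n]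
    [DecidableEq n] [RCLike 𝕜] [CommRing S] [Algebra 𝕜 S] {H : Matrix n n 𝕜}
    (hH : H.IsHermitian) (c e : S) :
    det (c • 1 + e • H.map (algebraMap 𝕜 S)) =
      ∏ i, (c + e * algebraMap 𝕜 S (hH.eigenvalues i)) := by
  set f := (algebraMap 𝕜 S).mapMatrix (m := n)
  set U : Matrix n n 𝕜 := (hH.eigenvectorUnitary : Matrix n n 𝕜)
  have hUV : f U * f (star U) = 1 := by
    rw [← map_mul, Unitary.mul_star_self_of_mem hH.eigenvectorUnitary.2, map_one]
  have hspectral := hH.spectral_theorem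
  rw [Unitary.conjStarAlgAut_apply] at hspectral
  have hmap : H.map (algebraMap 𝕜 S) =
      f U * diagonal (fun i => algebraMap 𝕜 S (hH.eigenvalues i)) * f (star U) := by
    conv_lhs => rw [hspectral]
    rw [← RingHom.mapMatrix_apply, map_mul, map_mul]
    congr 2
    simp [RingHom.mapMatrix_apply, diagonal_map]
  rw [hmap, det_smul_one_add_smul_mul_diagonal_mul hUV]

theorem Matrix.mem_spectrum_iff_det_smul_one_sub_eq_zero {n K : Type*} [Fintype n]
    [DecidableEq n] [Field K] (M : Matrix n n K) (z : K) :
    z ∈ spectrum K M ↔ det (z • 1 - M) = 0 := by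
  rw [spectrum.mem_iff, Algebra.algebraMap_eq_smul_one, isUnit_iff_isUnit_det,
    isUnit_iff_ne_zero, not_not]

noncomputable def quadRootRadius (t p : ℝ) : ℝ :=
  if 0 ≤ t ^ 2 - 4 * p then (1 / 2) * |t| + (1 / 2) * √(t ^ 2 - 4 * p) else √p

theorem rhoLam_eq_quadRootRadius (α β lam : ℝ) :
    rhoLam α β lam = quadRootRadius ((1 + β) * (1 - α * lam)) (β * (1 - α * lam)) := by
  rw [rhoLam, quadRootRadius, mul_pow, ← mul_assoc]

theorem rhoLam_nonneg (α β lam : ℝ) : 0 ≤ rhoLam α β lam := by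
  unfold rhoLam
  split_ifs <;> positivity

section QuadraticRoots

open Complex

theorem quadratic_eq_zero_iff_of_sq_eq {t p δ z : ℂ} (hδ : δ ^ 2 = t ^ 2 - 4 * p) :
    z ^ 2 - t * z + p = 0 ↔ z = (t + δ) / 2 ∨ z = (t - δ) / 2 := by
  have hfactor : z ^ 2 - t * z + p = (z - (t + δ) / 2) * (z - (t - δ) / 2) := by
    linear_combination (1 / 4 : ℂ) * hδ
  rw [hfactor, mul_eq_zero, sub_eq_zero, sub_eq_zero]

variable {t p : ℝ} {z : ℂ}

theorem quadratic_eq_zero_iff_of_discrim_nonneg (hD : 0 ≤ t ^ 2 - 4 * p) :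
    z ^ 2 - t * z + p = 0 ↔
      z = ((t + √(t ^ 2 - 4 * p)) / 2 : ℝ) ∨ z = ((t - √(t ^ 2 - 4 * p)) / 2 : ℝ) := by
  push_cast
  exact quadratic_eq_zero_iff_of_sq_eq (by rw [← ofReal_pow, Real.sq_sqrt hD]; push_cast; ring)

theorem quadratic_eq_zero_iff_of_discrim_neg (hD : t ^ 2 - 4 * p < 0) :
    z ^ 2 - t * z + p = 0 ↔
      z = t / 2 + (√(4 * p - t ^ 2) / 2 : ℝ) * I ∨
        z = t / 2 + (-√(4 * p - t ^ 2) / 2 : ℝ) * I := by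
  have hδ : ((√(4 * p - t ^ 2) : ℝ) * I) ^ 2 = (t : ℂ) ^ 2 - 4 * p := by
    rw [mul_pow, I_sq, ← ofReal_pow, Real.sq_sqrt (by linarith)]; push_cast; ring
  rw [quadratic_eq_zero_iff_of_sq_eq hδ]
  push_cast
  constructor <;> rintro (h | h) <;> [left; right; left; right] <;> rw [h] <;> ring

theorem norm_eq_sqrt_of_discrim_neg (hD : t ^ 2 - 4 * p < 0) (hz : z ^ 2 - t * z + p = 0) :
    ‖z‖ = √p := by
  have hnorm : ∀ s : ℝ, s ^ 2 = 4 * p - t ^ 2 → ‖(t / 2 : ℂ) + (s / 2 : ℝ) * I‖ = √p := by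
    intro s hs
    rw [← ofReal_ofNat, ← ofReal_div, norm_add_mul_I]
    congr 1
    linear_combination hs / 4
  have hsq : (√(4 * p - t ^ 2)) ^ 2 = 4 * p - t ^ 2 := Real.sq_sqrt (by linarith)
  rcases (quadratic_eq_zero_iff_of_discrim_neg hD).1 hz with rfl | rfl
  · exact hnorm _ hsq
  · exact hnorm _ (by rw [neg_sq, hsq])

theorem norm_le_quadRootRadius (hz : z ^ 2 - t * z + p = 0) : ‖z‖ ≤ quadRootRadius t p := by
  unfold quadRootRadius
  split_ifs with hD
  · have hs := Real.sqrt_nonneg (t ^ 2 - 4 * p)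
    rcases (quadratic_eq_zero_iff_of_discrim_nonneg hD).1 hz with rfl | rfl <;>
      rw [norm_real, Real.norm_eq_abs, abs_div, abs_two]
    · linarith [abs_add_le t √(t ^ 2 - 4 * p), abs_of_nonneg hs]
    · linarith [abs_sub t √(t ^ 2 - 4 * p), abs_of_nonneg hs]
  · exact (norm_eq_sqrt_of_discrim_neg (not_le.1 hD) hz).le

theorem exists_root_norm_eq_quadRootRadius (t p : ℝ) :
    ∃ z : ℂ, z ^ 2 - t * z + p = 0 ∧ ‖z‖ = quadRootRadius t p := by
  unfold quadRootRadius
  split_ifs with hD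
  · have hs := Real.sqrt_nonneg (t ^ 2 - 4 * p)
    rcases le_total 0 t with ht | ht
    · refine ⟨_, (quadratic_eq_zero_iff_of_discrim_nonneg hD).2 (Or.inl rfl), ?_⟩
      rw [norm_real, Real.norm_eq_abs, abs_of_nonneg (by positivity), abs_of_nonneg ht]
      ring
    · refine ⟨_, (quadratic_eq_zero_iff_of_discrim_nonneg hD).2 (Or.inr rfl), ?_⟩
      rw [norm_real, Real.norm_eq_abs, abs_of_nonpos (by linarith), abs_of_nonpos ht]
      ring
  · have hz := (quadratic_eq_zero_iff_of_discrim_neg (not_le.1 hD)).2 (Or.inl rfl)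
    exact ⟨_, hz, norm_eq_sqrt_of_discrim_neg (not_le.1 hD) hz⟩

end QuadraticRoots

section RadiusMonotone

variable {β s s' : ℝ}

theorem quadRootRadius_le_of_nonneg_of_le (hβ : 0 ≤ β) (hs : 0 ≤ s) (hss' : s ≤ s') :
    quadRootRadius ((1 + β) * s) (β * s) ≤ quadRootRadius ((1 + β) * s') (β * s') := by
  have hs' : 0 ≤ s' := hs.trans hss'
  have hdisc : ∀ r, ((1 + β) * r) ^ 2 - 4 * (β * r) = r * ((1 + β) ^ 2 * r - 4 * β) :=
    fun r => by ring
  unfold quadRootRadius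
  rw [hdisc, hdisc, abs_of_nonneg (by positivity), abs_of_nonneg (by positivity)]
  rcases hs.eq_or_lt with rfl | hs0
  · simp only [mul_zero, zero_mul, Real.sqrt_zero, le_refl, ite_true, add_zero]
    split_ifs <;> positivity
  split_ifs with hD hD'
  · have hk : 4 * β ≤ (1 + β) ^ 2 * s := by nlinarith
    have hDD' : s * ((1 + β) ^ 2 * s - 4 * β) ≤ s' * ((1 + β) ^ 2 * s' - 4 * β) := by
      nlinarith [mul_le_mul_of_nonneg_left hss' (sq_nonneg (1 + β))]
    nlinarith [Real.sqrt_le_sqrt hDD']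
  · have hk : 4 * β ≤ (1 + β) ^ 2 * s := by nlinarith
    nlinarith [mul_le_mul_of_nonneg_left hss' (sq_nonneg (1 + β))]
  · have hβs' : √(β * s') ≤ (1 / 2) * ((1 + β) * s') := by
      rw [Real.sqrt_le_left (by positivity)]
      nlinarith
    nlinarith [Real.sqrt_nonneg (s' * ((1 + β) ^ 2 * s' - 4 * β)),
      Real.sqrt_le_sqrt (mul_le_mul_of_nonneg_left hss' hβ)]
  · exact Real.sqrt_le_sqrt (mul_le_mul_of_nonneg_left hss' hβ)

theorem quadRootRadius_le_of_nonpos_of_le (hβ : 0 ≤ β) (hs : s ≤ 0) (hs's : s' ≤ s) :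
    quadRootRadius ((1 + β) * s) (β * s) ≤ quadRootRadius ((1 + β) * s') (β * s') := by
  have hs' : s' ≤ 0 := hs's.trans hs
  have hdisc : ∀ r, ((1 + β) * r) ^ 2 - 4 * (β * r) = r * ((1 + β) ^ 2 * r - 4 * β) :=
    fun r => by ring
  have hD : ∀ r ≤ 0, 0 ≤ r * ((1 + β) ^ 2 * r - 4 * β) := fun r hr =>
    mul_nonneg_of_nonpos_of_nonpos hr (by nlinarith [sq_nonneg (1 + β)])
  unfold quadRootRadius
  rw [hdisc, hdisc, if_pos (hD s hs), if_pos (hD s' hs'),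
    abs_of_nonpos (by nlinarith), abs_of_nonpos (by nlinarith)]
  have hDD' : s * ((1 + β) ^ 2 * s - 4 * β) ≤ s' * ((1 + β) ^ 2 * s' - 4 * β) := by
    nlinarith [mul_le_mul_of_nonneg_left hs's (sq_nonneg (1 + β))]
  nlinarith [Real.sqrt_le_sqrt hDD']

theorem rhoLam_le_max_of_mem_Icc {α μ L lam : ℝ} (hα : 0 ≤ α) (hβ : 0 ≤ β)
    (hlam : lam ∈ Set.Icc μ L) :
    rhoLam α β lam ≤ max (rhoLam α β μ) (rhoLam α β L) := by
  simp only [rhoLam_eq_quadRootRadius]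
  rcases le_total 0 (1 - α * lam) with hs | hs
  · exact le_max_of_le_left <| quadRootRadius_le_of_nonneg_of_le hβ hs <|
      by nlinarith [hlam.1]
  · exact le_max_of_le_right <| quadRootRadius_le_of_nonpos_of_le hβ hs <|
      by nlinarith [hlam.2]

end RadiusMonotone

section Momentum

variable {n : Type*} [Fintype n] [DecidableEq n]

noncomputable def momentumMatrix (α β : ℝ) (H : Matrix n n ℝ) : Matrix (n ⊕ n) (n ⊕ n) ℝ :=
  fromBlocks (1 - (α * (1 + β)) • H) ((β ^ 2) • 1) (-(α • H)) (β • 1)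

theorem det_smul_one_sub_momentumMatrix_map {H : Matrix n n ℝ} (hH : H.IsHermitian)
    (α β : ℝ) (z : ℂ) :
    det (z • 1 - (momentumMatrix α β H).map (algebraMap ℝ ℂ)) =
      ∏ i, (z ^ 2 - ((1 + β) * (1 - α * hH.eigenvalues i) : ℝ) * z
        + (β * (1 - α * hH.eigenvalues i) : ℝ)) := by
  set Hc := H.map (algebraMap ℝ ℂ)
  have hblocks : z • 1 - (momentumMatrix α β H).map (algebraMap ℝ ℂ) =
      fromBlocks ((z - 1) • 1 + ((α * (1 + β) : ℝ) : ℂ) • Hc) (-((β ^ 2 : ℝ) : ℂ) • 1)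
        ((α : ℂ) • Hc) ((z - β) • 1) := by
    ext (i | i) (j | j) <;> by_cases h : i = j <;>
      simp [momentumMatrix, Hc, one_apply, h, sub_add]
  have hschur : (z - β) • ((z - 1) • 1 + ((α * (1 + β) : ℝ) : ℂ) • Hc) -
        (-((β ^ 2 : ℝ) : ℂ) • 1) * ((α : ℂ) • Hc) =
      ((z - β) * (z - 1)) • 1 + ((z - β) * (α * (1 + β) : ℝ) + (β ^ 2 * α : ℝ)) • Hc := by
    simp only [Matrix.smul_mul, Matrix.one_mul]
    push_cast
    module
  rw [hblocks, det_fromBlocks_smul_one, hschur, hH.det_smul_one_add_smul_map]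
  refine Finset.prod_congr rfl fun i _ => ?_
  simp only [Complex.coe_algebraMap, RCLike.ofReal_real_eq_id, id]
  push_cast
  ring

theorem mem_spectrum_momentumMatrix_map_iff {H : Matrix n n ℝ} (hH : H.IsHermitian)
    (α β : ℝ) (z : ℂ) :
    z ∈ spectrum ℂ ((momentumMatrix α β H).map (algebraMap ℝ ℂ)) ↔
      ∃ i, z ^ 2 - ((1 + β) * (1 - α * hH.eigenvalues i) : ℝ) * z
        + (β * (1 - α * hH.eigenvalues i) : ℝ) = 0 := by
  rw [mem_spectrum_iff_det_smul_one_sub_eq_zero, det_smul_one_sub_momentumMatrix_map hH,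
    Finset.prod_eq_zero_iff]
  simp

theorem specRad_momentumMatrix {H : Matrix n n ℝ} (hH : H.IsHermitian) (α β : ℝ) :
    specRad (momentumMatrix α β H) = sSup (rhoLam α β '' spectrum ℝ H) := by
  refine csSup_eq_csSup_of_forall_exists_le ?_ ?_
  · rintro _ ⟨z, hz, rfl⟩
    obtain ⟨i, hi⟩ := (mem_spectrum_momentumMatrix_map_iff hH α β z).1 hz
    refine ⟨_, ⟨_, hH.eigenvalues_mem_spectrum_real i, rfl⟩, ?_⟩
    rw [rhoLam_eq_quadRootRadius]
    exact norm_le_quadRootRadius hi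
  · rintro _ ⟨lam, hlam, rfl⟩
    obtain ⟨i, rfl⟩ : lam ∈ Set.range hH.eigenvalues :=
      hH.spectrum_real_eq_range_eigenvalues ▸ hlam
    obtain ⟨z, hz, hnorm⟩ := exists_root_norm_eq_quadRootRadius
      ((1 + β) * (1 - α * hH.eigenvalues i)) (β * (1 - α * hH.eigenvalues i))
    refine ⟨‖z‖, ⟨z, (mem_spectrum_momentumMatrix_map_iff hH α β z).2 ⟨i, hz⟩, rfl⟩, ?_⟩
    rw [hnorm, rhoLam_eq_quadRootRadius]

end Momentum

theorem stmt8_general {d : ℕ} (μ L α β : ℝ)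
    (hα : 0 < α) (hβ : 0 ≤ β)
    (H : Matrix (Fin d) (Fin d) ℝ) (hsymm : H.IsSymm)
    (hspec : spectrum ℝ H ⊆ Set.Icc μ L)
    (A : Matrix (Fin d ⊕ Fin d) (Fin d ⊕ Fin d) ℝ)
    (hA : A = Matrix.fromBlocks (1 - (α * (1 + β)) • H) ((β ^ 2) • 1)
      (-(α • H)) (β • 1)) :
    specRad A = sSup ((fun lam => rhoLam α β lam) '' spectrum ℝ H) ∧
    specRad A ≤ max (rhoLam α β μ) (rhoLam α β L) := by
  obtain rfl : A = momentumMatrix α β H := hA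
  have hrad := specRad_momentumMatrix (isHermitian_iff_isSymm.2 hsymm) α β
  refine ⟨hrad, hrad ▸ Real.sSup_le ?_ (le_max_of_le_left (rhoLam_nonneg α β μ))⟩
  rintro _ ⟨lam, hlam, rfl⟩
  exact rhoLam_le_max_of_mem_Icc hα.le hβ (hspec hlam)

/-- For `H` symmetric with all eigenvalues in `[μ, L]` and
`A = [[I − α(1+β)H, β²I], [−αH, βI]]`, the spectral radius of `A` equals the maximum of
`ρ_λ(α, β)` over the eigenvalues `λ` of `H`, and consequently
`ρ(A) ≤ max {ρ_μ(α,β), ρ_L(α,β)}`. -/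
theorem stmt8 {d : ℕ} (μ L α β : ℝ) (hμ : 0 < μ) (hμL : μ ≤ L)
    (hα : 0 < α) (hβ : 0 ≤ β)
    (H : Matrix (Fin d) (Fin d) ℝ) (hsymm : H.IsSymm)
    (hspec : spectrum ℝ H ⊆ Set.Icc μ L)
    (A : Matrix (Fin d ⊕ Fin d) (Fin d ⊕ Fin d) ℝ)
    (hA : A = Matrix.fromBlocks (1 - (α * (1 + β)) • H) ((β ^ 2) • 1)
      (-(α • H)) (β • 1)) :
    specRad A = sSup ((fun lam => rhoLam α β lam) '' spectrum ℝ H) ∧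
    specRad A ≤ max (rhoLam α β μ) (rhoLam α β L) :=
  stmt8_general μ L α β hα hβ H hsymm hspec A hA
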